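/- Let X ∈ Sp(2p,2n) and let G ∈ ℝ^{2n×2p} (the Euclidean gradient of an extended objective function at X). Define Ω as the unique skew-symmetric solution of XᵀXΩ + ΩXᵀX = XᵀJᵀG - GᵀJX, and set grad f(X) = G - JXΩ. Then grad f(X) lies in the tangent space at X, and for every tangent vector Z at X, tr(grad f(X)ᵀ Z) = tr(Gᵀ Z). -/
import Mathlib


open Matrix

noncomputable def J (m : ℕ) : Matrix (Fin m ⊕ Fin m) (Fin m ⊕ Fin m) ℝ :=
  Matrix.fromBlocks 0 1 (-1) 0

lemma J_transpose (m : ℕ) : (_root_.J m)ᵀ = -_root_.J m := by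
  simp only [_root_.J, Matrix.fromBlocks_transpose, Matrix.fromBlocks_neg,
    transpose_zero, transpose_one, transpose_neg, neg_zero, neg_neg]

lemma J_mul_J (m : ℕ) : _root_.J m * _root_.J m = -1 := by
  simp only [_root_.J, Matrix.fromBlocks_multiply]
  rw [← Matrix.fromBlocks_one, Matrix.fromBlocks_neg]
  simp

theorem sp_riemannian_gradient (p n : ℕ)
    (X G : Matrix (Fin n ⊕ Fin n) (Fin p ⊕ Fin p) ℝ)
    (hX : Xᵀ * J n * X = J p)
    (Ω : Matrix (Fin p ⊕ Fin p) (Fin p ⊕ Fin p) ℝ) (hΩ : Ωᵀ = -Ω)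
    (hLyap : Xᵀ * X * Ω + Ω * (Xᵀ * X) = Xᵀ * (J n)ᵀ * G - Gᵀ * J n * X) :
    ((G - J n * X * Ω)ᵀ * J n * X + Xᵀ * J n * (G - J n * X * Ω) = 0) ∧
    (∀ Z : Matrix (Fin n ⊕ Fin n) (Fin p ⊕ Fin p) ℝ,
      Zᵀ * J n * X + Xᵀ * J n * Z = 0 →
      Matrix.trace ((G - J n * X * Ω)ᵀ * Z) = Matrix.trace (Gᵀ * Z)) := by
  have h1 := J_transpose n
  have h2 := J_mul_J n
  have h2' : ∀ Y : Matrix (Fin n ⊕ Fin n) (Fin p ⊕ Fin p) ℝ,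
      _root_.J n * (_root_.J n * Y) = -Y := by
    intro Y
    rw [← Matrix.mul_assoc, h2]
    simp
  constructor
  · simp only [transpose_sub, transpose_mul, transpose_transpose, hΩ, h1,
      Matrix.sub_mul, Matrix.mul_sub, Matrix.neg_mul, Matrix.mul_neg, neg_neg,
      Matrix.mul_assoc, h2'] at hLyap ⊢
    rw [show Gᵀ * (J n * X) - -(Ω * (Xᵀ * X)) + (Xᵀ * (J n * G) - -(Xᵀ * (X * Ω)))
        = (Xᵀ * (X * Ω) + Ω * (Xᵀ * X)) + (Xᵀ * (J n * G) + Gᵀ * (J n * X)) from by abel,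
      hLyap]
    abel
  · intro Z hZ
    have hA : (Xᵀ * (_root_.J n * Z))ᵀ = Xᵀ * (_root_.J n * Z) := by
      have h' : Xᵀ * (_root_.J n * Z) = -(Zᵀ * (_root_.J n * X)) := by
        rw [eq_neg_iff_add_eq_zero, add_comm]
        simpa only [Matrix.mul_assoc] using hZ
      rw [transpose_mul, transpose_mul, transpose_transpose, h1, h']
      simp only [Matrix.neg_mul, Matrix.mul_neg, neg_neg, Matrix.mul_assoc]
    have hT : (G - _root_.J n * X * Ω)ᵀ * Z = Gᵀ * Z - Ω * (Xᵀ * (_root_.J n * Z)) := by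
      simp only [transpose_sub, transpose_mul, transpose_transpose, hΩ, h1,
        Matrix.sub_mul, Matrix.neg_mul, Matrix.mul_neg, neg_neg, Matrix.mul_assoc]
    have htr : trace (Ω * (Xᵀ * (_root_.J n * Z))) = 0 := by
      have t1 : trace (Ω * (Xᵀ * (_root_.J n * Z)))
          = trace ((Ω * (Xᵀ * (_root_.J n * Z)))ᵀ) := (trace_transpose _).symm
      rw [transpose_mul, hA, hΩ, Matrix.mul_neg, trace_neg, trace_mul_comm] at t1
      rw [trace_mul_comm]
      linarith
    rw [hT, trace_sub, htr, sub_zero]
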